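/- In the discrete phase shifting model, the probability of non-zero secrecy capacity P(γ_B > γ_E) is independent of L: with γ_B exponential of mean Lγ̄_B and γ_E = γ̄_E X/Y (X exponential mean L independent of Y supported on [R₁^δ, R₂^δ]), one has P(γ_B > γ_E) = (2/(δ(R₂²−R₁²))) ∫_{R₁^δ}^{R₂^δ} y^{2/δ−1} · (γ̄_B y)/(γ̄_B y + γ̄_E) dy, which does not depend on L. -/

import Mathlib

open MeasureTheory ProbabilityTheory Real Set Filter

/-- Exponential distribution with mean `m` (density `m⁻¹ e^{-x/m}` on `x ≥ 0`). -/
noncomputable def expMean (m : ℝ) : Measure ℝ :=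
  volume.withDensity fun x => ENNReal.ofReal (if 0 ≤ x then m⁻¹ * Real.exp (-x / m) else 0)

/-- Path-loss distribution: density `(2/δ) y^{2/δ-1}/(R₂²-R₁²)` on `[R₁^δ, R₂^δ]`. -/
noncomputable def pathLossMeasure (δ R₁ R₂ : ℝ) : Measure ℝ :=
  volume.withDensity fun y => ENNReal.ofReal
    (if y ∈ Set.Icc (R₁ ^ δ) (R₂ ^ δ) then 2 / δ * y ^ (2 / δ - 1) / (R₂ ^ 2 - R₁ ^ 2) else 0)

/-- Lower incomplete gamma function `γinc(a,x) = ∫₀ˣ t^{a-1} e^{-t} dt`. -/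
noncomputable def lowerGamma (a x : ℝ) : ℝ := ∫ t in (0:ℝ)..x, t ^ (a - 1) * Real.exp (-t)

/-!
Conditionally on `(X, Y)`, the event `γ_B > γ̄_E X / Y` has the exponential tail probability
`exp (-γ̄_E X / (L γ̄_B Y))`. Averaging over `X` evaluates the Laplace transform of an exponential
law of mean `L` at `γ̄_E / (L γ̄_B Y)`, which gives `γ̄_B Y / (γ̄_B Y + γ̄_E)`: the two factors `L`
cancel. It remains to integrate this function against the density of `Y`.
-/

lemma lintegral_Ioi_ofReal_exp_mul {a : ℝ} (ha : a < 0) (c : ℝ) :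
    ∫⁻ x in Ioi c, ENNReal.ofReal (exp (a * x)) = ENNReal.ofReal (-exp (a * c) / a) := by
  rw [← ofReal_integral_eq_lintegral_ofReal (integrableOn_exp_mul_Ioi ha c)
    (ae_of_all _ fun _ => (exp_pos _).le), integral_exp_mul_Ioi ha c]

lemma expMean_eq_withDensity (m : ℝ) :
    expMean m = (volume.restrict (Ioi 0)).withDensity
      fun x => ENNReal.ofReal (m⁻¹ * exp (-x / m)) := by
  rw [Measure.restrict_congr_set Ioi_ae_eq_Ici, ← withDensity_indicator measurableSet_Ici,
    expMean]
  congr 1 with x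
  by_cases hx : 0 ≤ x <;> simp [hx]

instance (m : ℝ) : SFinite (expMean m) := by
  rw [expMean_eq_withDensity]; infer_instance

lemma ae_pos_expMean (m : ℝ) : ∀ᵐ x ∂expMean m, 0 < x := by
  rw [expMean_eq_withDensity]
  exact (withDensity_absolutelyContinuous _ _).ae_le (ae_restrict_mem measurableSet_Ioi)

lemma ofReal_inv_mul_exp_neg_div {m : ℝ} (hm : 0 ≤ m) (x : ℝ) :
    ENNReal.ofReal (m⁻¹ * exp (-x / m)) =
      ENNReal.ofReal m⁻¹ * ENNReal.ofReal (exp (-m⁻¹ * x)) := by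
  rw [ENNReal.ofReal_mul (inv_nonneg.2 hm), neg_div, div_eq_inv_mul, neg_mul]

lemma expMean_Ioi {m : ℝ} (hm : 0 < m) {t : ℝ} (ht : 0 ≤ t) :
    expMean m (Ioi t) = ENNReal.ofReal (exp (-(t / m))) := by
  rw [expMean_eq_withDensity, withDensity_apply _ measurableSet_Ioi,
    Measure.restrict_restrict measurableSet_Ioi, inter_eq_left.2 (Ioi_subset_Ioi ht)]
  simp_rw [ofReal_inv_mul_exp_neg_div hm.le]
  rw [lintegral_const_mul _ (by fun_prop),
    lintegral_Ioi_ofReal_exp_mul (neg_neg_of_pos (inv_pos.2 hm)), ← ENNReal.ofReal_mul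
    (inv_nonneg.2 hm.le)]
  congr 1
  field_simp

lemma lintegral_exp_neg_mul_expMean {m : ℝ} (hm : 0 < m) {c : ℝ} (hc : 0 ≤ c) :
    ∫⁻ x, ENNReal.ofReal (exp (-(c * x))) ∂expMean m = ENNReal.ofReal (1 / (1 + c * m)) := by
  have hmc : 0 < m⁻¹ + c := by positivity
  rw [expMean_eq_withDensity, lintegral_withDensity_eq_lintegral_mul _ (by fun_prop)
    (by fun_prop)]
  have hprod (x : ℝ) : ENNReal.ofReal (m⁻¹ * exp (-x / m)) * ENNReal.ofReal (exp (-(c * x))) =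
      ENNReal.ofReal m⁻¹ * ENNReal.ofReal (exp (-(m⁻¹ + c) * x)) := by
    rw [ofReal_inv_mul_exp_neg_div hm.le, mul_assoc, ← ENNReal.ofReal_mul (exp_pos _).le,
      ← exp_add]
    ring_nf
  simp_rw [Pi.mul_apply, hprod]
  rw [lintegral_const_mul _ (by fun_prop), lintegral_Ioi_ofReal_exp_mul (by linarith),
    ← ENNReal.ofReal_mul (inv_nonneg.2 hm.le), mul_zero, exp_zero]
  congr 1
  field_simp

/-- For independent `X ~ expMean m`, `W ~ expMean n`, this is `P(W > c X)`. -/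
lemma lintegral_expMean_Ioi_const_mul {m n c : ℝ} (hm : 0 < m) (hn : 0 < n) (hc : 0 ≤ c) :
    ∫⁻ x, expMean n (Ioi (c * x)) ∂expMean m = ENNReal.ofReal (n / (n + c * m)) := by
  have htail : ∀ᵐ x ∂expMean m, expMean n (Ioi (c * x)) = ENNReal.ofReal (exp (-(c / n * x))) :=
    (ae_pos_expMean m).mono fun x hx => by
      rw [expMean_Ioi hn (by positivity), div_mul_eq_mul_div]
  rw [lintegral_congr_ae htail, lintegral_exp_neg_mul_expMean hm (by positivity)]
  congr 1
  field_simp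

lemma pathLossMeasure_eq_withDensity (δ R₁ R₂ : ℝ) :
    pathLossMeasure δ R₁ R₂ = (volume.restrict (Icc (R₁ ^ δ) (R₂ ^ δ))).withDensity
      fun y => ENNReal.ofReal (2 / δ * y ^ (2 / δ - 1) / (R₂ ^ 2 - R₁ ^ 2)) := by
  rw [← withDensity_indicator measurableSet_Icc, pathLossMeasure]
  congr 1 with y
  by_cases hy : y ∈ Icc (R₁ ^ δ) (R₂ ^ δ) <;> simp [hy]

instance (δ R₁ R₂ : ℝ) : SFinite (pathLossMeasure δ R₁ R₂) := by
  rw [pathLossMeasure_eq_withDensity]; infer_instance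

lemma ae_mem_Icc_pathLossMeasure (δ R₁ R₂ : ℝ) :
    ∀ᵐ y ∂pathLossMeasure δ R₁ R₂, y ∈ Icc (R₁ ^ δ) (R₂ ^ δ) := by
  rw [pathLossMeasure_eq_withDensity]
  exact (withDensity_absolutelyContinuous _ _).ae_le (ae_restrict_mem measurableSet_Icc)

lemma lintegral_pathLossMeasure {δ R₁ R₂ : ℝ} (hδ : 0 < δ) (hR₁ : 0 < R₁) (hR : R₁ < R₂)
    {f : ℝ → ℝ} (hf : ContinuousOn f (Icc (R₁ ^ δ) (R₂ ^ δ)))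
    (hf₀ : ∀ y ∈ Icc (R₁ ^ δ) (R₂ ^ δ), 0 ≤ f y) :
    ∫⁻ y, ENNReal.ofReal (f y) ∂pathLossMeasure δ R₁ R₂ =
      ENNReal.ofReal (2 / (δ * (R₂ ^ 2 - R₁ ^ 2)) *
        ∫ y in R₁ ^ δ..R₂ ^ δ, y ^ (2 / δ - 1) * f y) := by
  have hR₁₂ : 0 < R₂ ^ 2 - R₁ ^ 2 := sub_pos.2 (pow_lt_pow_left₀ hR hR₁.le two_ne_zero)
  set C := 2 / (δ * (R₂ ^ 2 - R₁ ^ 2)) with hC_def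
  have hC : 0 ≤ C := by positivity
  have hpos : ∀ y ∈ Icc (R₁ ^ δ) (R₂ ^ δ), 0 < y := fun y hy =>
    (rpow_pos_of_pos hR₁ δ).trans_le hy.1
  have hg : ContinuousOn (fun y => C * (y ^ (2 / δ - 1) * f y)) (Icc (R₁ ^ δ) (R₂ ^ δ)) :=
    continuousOn_const.mul
      (((continuousOn_id.rpow_const fun y hy => Or.inl (hpos y hy).ne')).mul hf)
  have hdensity : ∀ y ∈ Icc (R₁ ^ δ) (R₂ ^ δ),
      ENNReal.ofReal (2 / δ * y ^ (2 / δ - 1) / (R₂ ^ 2 - R₁ ^ 2)) * ENNReal.ofReal (f y) =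
        ENNReal.ofReal (C * (y ^ (2 / δ - 1) * f y)) := fun y hy => by
    have := hpos y hy
    rw [← ENNReal.ofReal_mul (by positivity), hC_def]
    field_simp
  rw [pathLossMeasure_eq_withDensity, lintegral_withDensity_eq_lintegral_mul₀ (by fun_prop)
    (hf.aemeasurable measurableSet_Icc).ennreal_ofReal, Pi.mul_def,
    setLIntegral_congr_fun measurableSet_Icc hdensity,
    ← ofReal_integral_eq_lintegral_ofReal (hg.integrableOn_compact isCompact_Icc)
      ((ae_restrict_iff' measurableSet_Icc).2 (ae_of_all _ fun y hy =>
        mul_nonneg hC (mul_nonneg (rpow_nonneg (hpos y hy).le _) (hf₀ y hy)))),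
    integral_const_mul, integral_Icc_eq_integral_Ioc,
    ← intervalIntegral.integral_of_le (rpow_le_rpow hR₁.le hR.le hδ.le)]

lemma measure_lt_eq_lintegral_map_Ioi {Ω α : Type*} [MeasurableSpace Ω] [MeasurableSpace α]
    {μ : Measure Ω} [IsFiniteMeasure μ] {Z : Ω → α} {W : Ω → ℝ} {g : α → ℝ}
    (hZ : Measurable Z) (hW : Measurable W) (hg : Measurable g) (hZW : IndepFun Z W μ) :
    μ {ω | g (Z ω) < W ω} = ∫⁻ z, μ.map W (Ioi (g z)) ∂μ.map Z := by
  have hS : MeasurableSet {p : α × ℝ | g p.1 < p.2} :=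
    measurableSet_lt (hg.comp measurable_fst) measurable_snd
  calc μ {ω | g (Z ω) < W ω} = μ.map (fun ω => (Z ω, W ω)) {p | g p.1 < p.2} :=
        (Measure.map_apply (hZ.prodMk hW) hS).symm
    _ = (μ.map Z).prod (μ.map W) {p | g p.1 < p.2} := by
        rw [(indepFun_iff_map_prod_eq_prod_map_map hZ.aemeasurable hW.aemeasurable).1 hZW]
    _ = _ := Measure.prod_apply hS

lemma measurable_measure_Ioi_comp {α : Type*} [MeasurableSpace α] (ν : Measure ℝ) [SFinite ν]
    {g : α → ℝ} (hg : Measurable g) : Measurable fun z => ν (Ioi (g z)) :=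
  measurable_measure_prodMk_left (measurableSet_lt (hg.comp measurable_fst) measurable_snd)

/-- PNZ in the discrete phase shifting model, independent of L. -/
theorem statement_7 {Ω : Type*} [MeasureSpace Ω] [IsProbabilityMeasure (ℙ : Measure Ω)]
    (L gB gE δ R₁ R₂ : ℝ) (hL : 0 < L) (hgB : 0 < gB) (hgE : 0 < gE) (hδ : 0 < δ)
    (hR₁ : 0 < R₁) (hR : R₁ < R₂)
    (γB X Y : Ω → ℝ) (hmB : Measurable γB) (hmX : Measurable X) (hmY : Measurable Y)
    (hBlaw : Measure.map γB ℙ = expMean (L * gB))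
    (hXlaw : Measure.map X ℙ = expMean L)
    (hYlaw : Measure.map Y ℙ = pathLossMeasure δ R₁ R₂)
    (hXY : IndepFun X Y ℙ)
    (hBE : IndepFun γB (fun ω => (X ω, Y ω)) ℙ) :
    ℙ {ω | gE * X ω / Y ω < γB ω} =
      ENNReal.ofReal (2 / (δ * (R₂ ^ 2 - R₁ ^ 2)) *
        ∫ y in R₁ ^ δ..R₂ ^ δ, y ^ (2 / δ - 1) * (gB * y / (gB * y + gE))) := by
  have hg : Measurable fun p : ℝ × ℝ => gE * p.1 / p.2 := by fun_prop
  have hpos : ∀ y ∈ Icc (R₁ ^ δ) (R₂ ^ δ), 0 < y := fun y hy =>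
    (rpow_pos_of_pos hR₁ δ).trans_le hy.1
  calc ℙ {ω | gE * X ω / Y ω < γB ω}
      = ∫⁻ p, expMean (L * gB) (Ioi (gE * p.1 / p.2))
          ∂(expMean L).prod (pathLossMeasure δ R₁ R₂) := by
        rw [measure_lt_eq_lintegral_map_Ioi (hmX.prodMk hmY) hmB hg hBE.symm,
          (indepFun_iff_map_prod_eq_prod_map_map hmX.aemeasurable hmY.aemeasurable).1 hXY,
          hXlaw, hYlaw, hBlaw]
    _ = ∫⁻ y, ∫⁻ x, expMean (L * gB) (Ioi (gE / y * x)) ∂expMean L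
          ∂pathLossMeasure δ R₁ R₂ := by
        simp_rw [lintegral_prod_symm' _ (measurable_measure_Ioi_comp _ hg), mul_div_right_comm]
    _ = ∫⁻ y, ENNReal.ofReal (gB * y / (gB * y + gE)) ∂pathLossMeasure δ R₁ R₂ := by
        refine lintegral_congr_ae ((ae_mem_Icc_pathLossMeasure δ R₁ R₂).mono fun y hy => ?_)
        have := hpos y hy
        dsimp only
        rw [lintegral_expMean_Ioi_const_mul hL (by positivity) (by positivity)]
        congr 1
        field_simp
    _ = _ := by
        refine lintegral_pathLossMeasure hδ hR₁ hR ?_ fun y hy => ?_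
        · exact (continuousOn_const.mul continuousOn_id).div (by fun_prop)
            fun y hy => (add_pos (mul_pos hgB (hpos y hy)) hgE).ne'
        · have := hpos y hy
          positivity
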